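/- Let (F_τ)_{τ ≥ 0} and (G_ρ)_{ρ ≥ 0} be continuous monotone increasing families in 𝒮 with F₀ = G₀. Then for every τ > 0 there exists ρ > 0 such that F₀ ≺ G_ρ ≺ F_τ. Consequently, the sets Up_{0+} = ⋂_{δ>0} Up(F_δ) and Down_{0-} (defined analogously for a decreasing approach) depend only on F₀ and not on the choice of the continuous monotone increasing family passing through F₀. -/
import Mathlib


open Set MeasureTheory Filter Topology

namespace SkewPaper

/-- A bi-infinite sequence over the alphabet `{1,…,N}` (modelled as `Fin N`) is allowed
by the 0-1 transition matrix `A`. -/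
def Allowed {N : ℕ} (A : Fin N → Fin N → Bool) (ω : ℤ → Fin N) : Prop :=
  ∀ n : ℤ, A (ω n) (ω (n + 1)) = true

/-- The subshift of finite type `Σ ⊆ {1,…,N}^ℤ` determined by the transition matrix `A`,
with the product (= metric `d(ω̄,ω) = 2^{-min{|n| : ω̄ₙ ≠ ωₙ}}`) topology. -/
abbrev Sig (N : ℕ) (A : Fin N → Fin N → Bool) : Type :=
  {ω : ℤ → Fin N // Allowed A ω}

variable {N : ℕ} {A : Fin N → Fin N → Bool}

/-- The left shift `σ : Σ → Σ`. -/
def shift (ω : Sig N A) : Sig N A :=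
  ⟨fun n => ω.1 (n + 1), fun n => ω.2 (n + 1)⟩

/-- The inverse `σ⁻¹` of the left shift. -/
def shiftInv (ω : Sig N A) : Sig N A :=
  ⟨fun n => ω.1 (n - 1), fun n => by
    show A (ω.1 (n - 1)) (ω.1 (n + 1 - 1)) = true
    have h := ω.2 (n - 1)
    have e1 : n - 1 + 1 = n := by ring
    have e2 : n + 1 - 1 = n := by ring
    rw [e1] at h; rw [e2]; exact h⟩

/-- Topological transitivity of the shift `σ` on `Σ`. -/
def ShiftTransitive (N : ℕ) (A : Fin N → Fin N → Bool) : Prop :=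
  ∀ U V : Set (Sig N A), IsOpen U → IsOpen V → U.Nonempty → V.Nonempty →
    ∃ n : ℕ, ((shift (A := A))^[n] '' U ∩ V).Nonempty

/-- The class `𝒮` of skew products `F(ω,x) = (σω, f_ω(x))` over the subshift `Σ`,
with fiber `I = [0,1]`.  The fiber maps `f_ω` (encoded as maps `ℝ → ℝ` whose behaviour
is prescribed on `I`) are orientation-preserving `C¹` diffeomorphisms sending `I`
strictly inside itself, with `C¹` inverses `fInv ω`, and `ω ↦ f_ω` is continuous in the
`C¹` sense. -/
structure SkewSys (N : ℕ) (A : Fin N → Fin N → Bool) where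
  f : Sig N A → ℝ → ℝ
  fInv : Sig N A → ℝ → ℝ
  contDiff : ∀ ω, ContDiffOn ℝ 1 (f ω) (Icc 0 1)
  deriv_pos : ∀ ω, ∀ x ∈ Icc (0:ℝ) 1, 0 < derivWithin (f ω) (Icc 0 1) x
  maps_in : ∀ ω, MapsTo (f ω) (Icc 0 1) (Ioo 0 1)
  leftInv : ∀ ω, ∀ x ∈ Icc (0:ℝ) 1, fInv ω (f ω x) = x
  inv_contDiff : ∀ ω, ContDiffOn ℝ 1 (fInv ω) (Icc 0 1)
  cont : ContinuousOn (fun p : Sig N A × ℝ => f p.1 p.2) (univ ×ˢ Icc 0 1)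
  cont_deriv : ContinuousOn
    (fun p : Sig N A × ℝ => derivWithin (f p.1) (Icc 0 1) p.2) (univ ×ˢ Icc 0 1)
  inv_cont : ContinuousOn (fun p : Sig N A × ℝ => fInv p.1 p.2) (univ ×ˢ Icc 0 1)
  inv_cont_deriv : ContinuousOn
    (fun p : Sig N A × ℝ => derivWithin (fInv p.1) (Icc 0 1) p.2) (univ ×ˢ Icc 0 1)

/-- The skew product map `F : Σ × ℝ → Σ × ℝ`, `(ω,x) ↦ (σω, f_ω(x))`. -/
def FMap (F : SkewSys N A) : Sig N A × ℝ → Sig N A × ℝ :=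
  fun p => (shift p.1, F.f p.1 p.2)

/-- The phase space `Σ × I`, viewed inside `Σ × ℝ`. -/
def phaseSpace (N : ℕ) (A : Fin N → Fin N → Bool) : Set (Sig N A × ℝ) :=
  univ ×ˢ Icc 0 1

/-- The graph of `γ` drifts up: `F(Γ) > Γ`, i.e. the graph function
`ω ↦ f_{σ⁻¹ω}(γ(σ⁻¹ω))` of `F(Γ)` is pointwise strictly above `γ`. -/
def DriftsUp (F : SkewSys N A) (γ : Sig N A → ℝ) : Prop :=
  ∀ ω, γ ω < F.f (shiftInv ω) (γ (shiftInv ω))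

/-- The graph of `γ` drifts down: `F(Γ) < Γ`. -/
def DriftsDown (F : SkewSys N A) (γ : Sig N A → ℝ) : Prop :=
  ∀ ω, F.f (shiftInv ω) (γ (shiftInv ω)) < γ ω

/-- `Up(F)`: the set of points `p = (ω,x)` drifting up, i.e. such that there is a
continuous `γ : Σ → I` whose graph drifts up with `γ(ω) < x < f_{σ⁻¹ω}(γ(σ⁻¹ω))`. -/
def Up (F : SkewSys N A) : Set (Sig N A × ℝ) :=
  {p | ∃ γ : Sig N A → ℝ, Continuous γ ∧ (∀ ω, γ ω ∈ Icc (0:ℝ) 1) ∧ DriftsUp F γ ∧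
    γ p.1 < p.2 ∧ p.2 < F.f (shiftInv p.1) (γ (shiftInv p.1))}

/-- `Down(F)`: the set of points drifting down. -/
def Down (F : SkewSys N A) : Set (Sig N A × ℝ) :=
  {p | ∃ γ : Sig N A → ℝ, Continuous γ ∧ (∀ ω, γ ω ∈ Icc (0:ℝ) 1) ∧ DriftsDown F γ ∧
    F.f (shiftInv p.1) (γ (shiftInv p.1)) < p.2 ∧ p.2 < γ p.1}

/-- The anchored set `Indiff(F) = (Σ × I) \ (Up(F) ∪ Down(F))`. -/
def Indiff (F : SkewSys N A) : Set (Sig N A × ℝ) :=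
  phaseSpace N A \ (Up F ∪ Down F)

/-- The nonwandering set `Ω(F)`: points `p ∈ Σ × I` such that every neighborhood `U`
of `p` in `Σ × I` satisfies `F^n(U) ∩ U ≠ ∅` for some `n ≥ 1`. -/
def NonWandering (F : SkewSys N A) : Set (Sig N A × ℝ) :=
  {p | p ∈ phaseSpace N A ∧ ∀ U : Set (Sig N A × ℝ), IsOpen U → p ∈ U →
    ∃ n : ℕ, 1 ≤ n ∧ ∃ q ∈ U ∩ phaseSpace N A, (FMap F)^[n] q ∈ U ∩ phaseSpace N A}

/-- The partial order `F ≺ F̃` on `𝒮`: `f_ω(x) < f̃_ω(x)` for all `ω ∈ Σ`, `x ∈ I`. -/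
def Prec (F G : SkewSys N A) : Prop :=
  ∀ ω, ∀ x ∈ Icc (0:ℝ) 1, F.f ω x < G.f ω x

/-- A skew product is multistep if its fiber maps depend only on finitely many
coordinates `ω_{-m}, …, ω_m` of `ω`. -/
def Multistep (F : SkewSys N A) : Prop :=
  ∃ m : ℕ, ∀ ω ω' : Sig N A, (∀ n : ℤ, n.natAbs ≤ m → ω.1 n = ω'.1 n) → F.f ω = F.f ω'

/-- The `C¹` distance `dist(F,F̃) = max_ω dist_{C¹}(f_ω^{±1}, f̃_ω^{±1})` on `𝒮`. -/
noncomputable def SDist (F G : SkewSys N A) : ℝ :=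
  ⨆ p : Sig N A × Icc (0:ℝ) 1,
    max
      (max |F.f p.1 p.2 - G.f p.1 p.2|
        |derivWithin (F.f p.1) (Icc 0 1) p.2 - derivWithin (G.f p.1) (Icc 0 1) p.2|)
      (max |F.fInv p.1 p.2 - G.fInv p.1 p.2|
        |derivWithin (F.fInv p.1) (Icc 0 1) p.2 - derivWithin (G.fInv p.1) (Icc 0 1) p.2|)

/-- The standard measure `m = μ × Leb` on `Σ × I` (with `Leb` Lebesgue measure
restricted to `I = [0,1]`). -/
noncomputable def stdMeasure (μ : Measure (Sig N A)) : Measure (Sig N A × ℝ) :=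
  μ.prod (volume.restrict (Icc 0 1))

/-- A family `(F_τ)_{τ ∈ (a,b)}` in `𝒮` is monotone increasing if `F_{τ₁} ≺ F_{τ₂}`
whenever `τ₁ < τ₂`. -/
def MonoFam (F : ℝ → SkewSys N A) (a b : ℝ) : Prop :=
  ∀ τ₁ ∈ Ioo a b, ∀ τ₂ ∈ Ioo a b, τ₁ < τ₂ → Prec (F τ₁) (F τ₂)

/-- A family `(F_τ)_{τ ∈ (a,b)}` in `𝒮` is continuous in `τ` for the metric `dist`. -/
def ContFam (F : ℝ → SkewSys N A) (a b : ℝ) : Prop :=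
  ∀ τ ∈ Ioo a b, ∀ ε : ℝ, 0 < ε → ∃ δ > 0,
    ∀ τ' ∈ Ioo a b, |τ' - τ| < δ → SDist (F τ') (F τ) < ε

/-- The pushforward `Γ ↦ F(Γ)` on graph functions: the graph of `pushGraph F γ`,
namely `ω ↦ f_{σ⁻¹ω}(γ(σ⁻¹ω))`, is the image `F(Γ)` of the graph `Γ` of `γ`. -/
def pushGraph (F : SkewSys N A) (γ : Sig N A → ℝ) : Sig N A → ℝ :=
  fun ω => F.f (shiftInv ω) (γ (shiftInv ω))

section Aux

instance : CompactSpace (Sig N A) := by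
  have h : IsClosed {ω : ℤ → Fin N | Allowed A ω} := by
    have he : {ω : ℤ → Fin N | Allowed A ω} =
        ⋂ n : ℤ, (fun ω : ℤ → Fin N => (ω n, ω (n + 1))) ⁻¹'
          {p : Fin N × Fin N | A p.1 p.2 = true} := by
      ext ω; simp [Allowed, Set.mem_iInter]
    rw [he]
    exact isClosed_iInter fun n =>
      (isClosed_discrete _).preimage ((continuous_apply n).prodMk (continuous_apply (n + 1)))
  exact isCompact_iff_compactSpace.mp h.isCompact

private lemma contOn_to_cont {g : Sig N A × ℝ → ℝ}
    (h : ContinuousOn g (univ ×ˢ Icc 0 1)) :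
    Continuous (fun p : Sig N A × Icc (0:ℝ) 1 => g (p.1, (p.2 : ℝ))) :=
  h.comp_continuous (continuous_fst.prodMk (continuous_subtype_val.comp continuous_snd))
    (fun p => ⟨mem_univ _, p.2.2⟩)

private lemma abs_f_sub_le (H K : SkewSys N A) (ω : Sig N A) (x : ℝ) (hx : x ∈ Icc (0:ℝ) 1) :
    |H.f ω x - K.f ω x| ≤ SDist H K := by
  have hΦ : Continuous (fun p : Sig N A × Icc (0:ℝ) 1 =>
      max
        (max |H.f p.1 p.2 - K.f p.1 p.2|
          |derivWithin (H.f p.1) (Icc 0 1) p.2 - derivWithin (K.f p.1) (Icc 0 1) p.2|)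
        (max |H.fInv p.1 p.2 - K.fInv p.1 p.2|
          |derivWithin (H.fInv p.1) (Icc 0 1) p.2 -
            derivWithin (K.fInv p.1) (Icc 0 1) p.2|)) := by
    refine Continuous.max (Continuous.max ?_ ?_) (Continuous.max ?_ ?_)
    · exact ((contOn_to_cont H.cont).sub (contOn_to_cont K.cont)).abs
    · exact ((contOn_to_cont H.cont_deriv).sub (contOn_to_cont K.cont_deriv)).abs
    · exact ((contOn_to_cont H.inv_cont).sub (contOn_to_cont K.inv_cont)).abs
    · exact ((contOn_to_cont H.inv_cont_deriv).sub (contOn_to_cont K.inv_cont_deriv)).abs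
  have hb : BddAbove (Set.range (fun p : Sig N A × Icc (0:ℝ) 1 =>
      max
        (max |H.f p.1 p.2 - K.f p.1 p.2|
          |derivWithin (H.f p.1) (Icc 0 1) p.2 - derivWithin (K.f p.1) (Icc 0 1) p.2|)
        (max |H.fInv p.1 p.2 - K.fInv p.1 p.2|
          |derivWithin (H.fInv p.1) (Icc 0 1) p.2 -
            derivWithin (K.fInv p.1) (Icc 0 1) p.2|))) :=
    (isCompact_range hΦ).bddAbove
  have h1 : |H.f ω x - K.f ω x| ≤
      max
        (max |H.f ω x - K.f ω x|
          |derivWithin (H.f ω) (Icc 0 1) x - derivWithin (K.f ω) (Icc 0 1) x|)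
        (max |H.fInv ω x - K.fInv ω x|
          |derivWithin (H.fInv ω) (Icc 0 1) x - derivWithin (K.fInv ω) (Icc 0 1) x|) :=
    le_trans (le_max_left _ _) (le_max_left _ _)
  exact le_trans h1 (le_ciSup hb (⟨ω, ⟨x, hx⟩⟩ : Sig N A × Icc (0:ℝ) 1))

private lemma gap (H K : SkewSys N A) (h : Prec H K) (hne : Nonempty (Sig N A)) :
    ∃ ε > 0, ∀ ω, ∀ x ∈ Icc (0:ℝ) 1, H.f ω x + ε ≤ K.f ω x := by
  have hΨ : Continuous (fun p : Sig N A × Icc (0:ℝ) 1 => K.f p.1 p.2 - H.f p.1 p.2) :=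
    (contOn_to_cont K.cont).sub (contOn_to_cont H.cont)
  have hne2 : Nonempty (Sig N A × Icc (0:ℝ) 1) :=
    ⟨⟨Classical.arbitrary _, ⟨0, by norm_num⟩⟩⟩
  obtain ⟨p0, -, hmin⟩ := isCompact_univ.exists_isMinOn univ_nonempty hΨ.continuousOn
  refine ⟨K.f p0.1 p0.2 - H.f p0.1 p0.2, sub_pos.mpr (h p0.1 p0.2 p0.2.2), ?_⟩
  intro ω x hx
  have := isMinOn_iff.mp hmin (⟨ω, ⟨x, hx⟩⟩ : Sig N A × Icc (0:ℝ) 1) (mem_univ _)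
  simpa using by linarith [this]

private lemma main_step (K : SkewSys N A) (L : ℝ → SkewSys N A)
    (hK : Prec (L 0) K)
    (hLcont : ∀ ε : ℝ, 0 < ε → ∃ δ > 0, ∀ s : ℝ, |s - 0| < δ → SDist (L s) (L 0) < ε) :
    ∃ ρ : ℝ, 0 < ρ ∧ Prec (L ρ) K := by
  rcases isEmpty_or_nonempty (Sig N A) with h | h
  · exact ⟨1, one_pos, fun ω => (h.false ω).elim⟩
  · obtain ⟨ε, hε, hgap⟩ := gap (L 0) K hK h
    obtain ⟨δ, hδ, hδ'⟩ := hLcont ε hε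
    refine ⟨δ / 2, by linarith, ?_⟩
    intro ω x hx
    have h1 : |(L (δ / 2)).f ω x - (L 0).f ω x| ≤ SDist (L (δ / 2)) (L 0) :=
      abs_f_sub_le _ _ ω x hx
    have h2 : SDist (L (δ / 2)) (L 0) < ε := by
      refine hδ' _ ?_
      rw [sub_zero, abs_of_pos (by linarith)]
      linarith
    have h3 := abs_lt.mp (lt_of_le_of_lt h1 h2)
    have h4 := hgap ω x hx
    linarith [h3.2]

private lemma main_step_neg (K : SkewSys N A) (L : ℝ → SkewSys N A)
    (hK : Prec K (L 0))
    (hLcont : ∀ ε : ℝ, 0 < ε → ∃ δ > 0, ∀ s : ℝ, |s - 0| < δ → SDist (L s) (L 0) < ε) :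
    ∃ ρ : ℝ, 0 < ρ ∧ Prec K (L (-ρ)) := by
  rcases isEmpty_or_nonempty (Sig N A) with h | h
  · exact ⟨1, one_pos, fun ω => (h.false ω).elim⟩
  · obtain ⟨ε, hε, hgap⟩ := gap K (L 0) hK h
    obtain ⟨δ, hδ, hδ'⟩ := hLcont ε hε
    refine ⟨δ / 2, by linarith, ?_⟩
    intro ω x hx
    have h1 : |(L (-(δ / 2))).f ω x - (L 0).f ω x| ≤ SDist (L (-(δ / 2))) (L 0) :=
      abs_f_sub_le _ _ ω x hx
    have h2 : SDist (L (-(δ / 2))) (L 0) < ε := by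
      refine hδ' _ ?_
      rw [sub_zero, abs_neg, abs_of_pos (by linarith)]
      linarith
    have h3 := abs_lt.mp (lt_of_le_of_lt h1 h2)
    have h4 := hgap ω x hx
    linarith [h3.1]

private lemma up_mono {H K : SkewSys N A} (h : Prec H K) : Up H ⊆ Up K := by
  rintro ⟨ω, x⟩ ⟨γ, hc, hmem, hdrift, h1, h2⟩
  exact ⟨γ, hc, hmem, fun ω' => lt_trans (hdrift ω') (h _ _ (hmem _)), h1,
    lt_trans h2 (h _ _ (hmem _))⟩

private lemma down_anti {H K : SkewSys N A} (h : Prec H K) : Down K ⊆ Down H := by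
  rintro ⟨ω, x⟩ ⟨γ, hc, hmem, hdrift, h1, h2⟩
  exact ⟨γ, hc, hmem, fun ω' => lt_trans (h _ _ (hmem _)) (hdrift ω'),
    lt_trans (h _ _ (hmem _)) h1, h2⟩

end Aux

/-- Two continuous monotone increasing families through the same `F₀ = G₀`
are equivalent: for every `τ > 0` there is `ρ > 0` with `F₀ ≺ G_ρ ≺ F_τ`; consequently
`Up_{0+} = ⋂_{δ>0} Up(F_δ)` and `Down_{0-} = ⋂_{δ>0} Down(F_{-δ})` do not depend on the
choice of the family through `F₀`. -/
theorem families_equivalent {N : ℕ} {A : Fin N → Fin N → Bool} (hN : 2 ≤ N)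
    (htrans : ShiftTransitive N A)
    (F G : ℝ → SkewSys N A)
    (hFmono : ∀ τ₁ τ₂ : ℝ, τ₁ < τ₂ → Prec (F τ₁) (F τ₂))
    (hGmono : ∀ ρ₁ ρ₂ : ℝ, ρ₁ < ρ₂ → Prec (G ρ₁) (G ρ₂))
    (hFcont : ∀ τ : ℝ, ∀ ε : ℝ, 0 < ε → ∃ δ > 0,
      ∀ τ' : ℝ, |τ' - τ| < δ → SDist (F τ') (F τ) < ε)
    (hGcont : ∀ ρ : ℝ, ∀ ε : ℝ, 0 < ε → ∃ δ > 0,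
      ∀ ρ' : ℝ, |ρ' - ρ| < δ → SDist (G ρ') (G ρ) < ε)
    (h0 : F 0 = G 0) :
    (∀ τ : ℝ, 0 < τ → ∃ ρ : ℝ, 0 < ρ ∧ Prec (F 0) (G ρ) ∧ Prec (G ρ) (F τ))
      ∧ (⋂ δ ∈ Ioi (0:ℝ), Up (F δ)) = (⋂ δ ∈ Ioi (0:ℝ), Up (G δ))
      ∧ (⋂ δ ∈ Ioi (0:ℝ), Down (F (-δ))) = (⋂ δ ∈ Ioi (0:ℝ), Down (G (-δ))) := by
  refine ⟨?_, ?_, ?_⟩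
  · intro τ hτ
    have hK : Prec (G 0) (F τ) := by
      have := hFmono 0 τ hτ; rwa [h0] at this
    obtain ⟨ρ, hρ, hPrec⟩ := main_step (F τ) G hK (hGcont 0)
    refine ⟨ρ, hρ, ?_, hPrec⟩
    have := hGmono 0 ρ hρ; rwa [← h0] at this
  · apply Set.Subset.antisymm
    · intro p hp
      simp only [mem_iInter] at hp ⊢
      intro ρ hρ
      have hK : Prec (F 0) (G ρ) := by
        have := hGmono 0 ρ hρ; rwa [← h0] at this
      obtain ⟨τ, hτ, hPrec⟩ := main_step (G ρ) F hK (hFcont 0)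
      exact up_mono hPrec (hp τ hτ)
    · intro p hp
      simp only [mem_iInter] at hp ⊢
      intro τ hτ
      have hK : Prec (G 0) (F τ) := by
        have := hFmono 0 τ hτ; rwa [h0] at this
      obtain ⟨ρ, hρ, hPrec⟩ := main_step (F τ) G hK (hGcont 0)
      exact up_mono hPrec (hp ρ hρ)
  · apply Set.Subset.antisymm
    · intro p hp
      simp only [mem_iInter] at hp ⊢
      intro ρ hρ
      have hK : Prec (G (-ρ)) (F 0) := by
        have := hGmono (-ρ) 0 (by have := mem_Ioi.mp hρ; linarith)
        rwa [← h0] at this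
      obtain ⟨τ, hτ, hPrec⟩ := main_step_neg (G (-ρ)) F hK (hFcont 0)
      exact down_anti hPrec (hp τ hτ)
    · intro p hp
      simp only [mem_iInter] at hp ⊢
      intro τ hτ
      have hK : Prec (F (-τ)) (G 0) := by
        have := hFmono (-τ) 0 (by have := mem_Ioi.mp hτ; linarith)
        rwa [h0] at this
      obtain ⟨ρ, hρ, hPrec⟩ := main_step_neg (F (-τ)) G hK (hGcont 0)
      exact down_anti hPrec (hp ρ hρ)
end SkewPaper
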